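/- Let G(S) be the induced subgraph of a subset S of variable nodes in a Tanner graph, and suppose G(S) is connected and contains a check node w of degree k ≥ 3 such that the graph G(S) with w deleted splits into exactly k connected components, each containing exactly one neighbor of w. Then S cannot be obtained from any subset S' ⊊ S whose induced subgraph is connected and has all check-node degrees at most 2 (an ETS) by successively adding variable nodes, where each added variable node is connected to at least 2 check nodes of the current subgraph's check set. -/

import Mathlib

/-!
Deleting `w` splits `G(S)` into branches, and the `k ≥ 3` neighbours of `w` lie in distinct ones.
A connected `G(S')` can pass from one branch to another only through `w`, which it meets in at
most two edges, so an ETS `S' ⊆ S` meets at most two branches. A node added by a dot expansion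
with `m ≥ 2` shares a check node other than `w` with the current set, hence lies in a branch
already met. So `S` meets at most two branches, which contradicts `k ≥ 3`.
-/

/-- Degree of a variable node `v` in the Tanner graph given by adjacency `adj`. -/
def varDeg {V C : Type*} [Fintype C] (adj : V → C → Prop) [∀ v c, Decidable (adj v c)] (v : V) : ℕ :=
  (Finset.univ.filter (fun c => adj v c)).card

/-- Degree of a check node `c` in the subgraph induced by the set `S` of variable nodes. -/
def chkDeg {V C : Type*} [DecidableEq V] (adj : V → C → Prop) [∀ v c, Decidable (adj v c)]
    (S : Finset V) (c : C) : ℕ :=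
  (S.filter (fun v => adj v c)).card

/-- The set of check nodes of odd degree in the subgraph induced by `S`. -/
def oddChks {V C : Type*} [DecidableEq V] [Fintype C] (adj : V → C → Prop) [∀ v c, Decidable (adj v c)]
    (S : Finset V) : Finset C :=
  Finset.univ.filter (fun c => Odd (chkDeg adj S c))

/-- The Tanner graph of the adjacency relation `adj`, as a simple graph on `V ⊕ C`. -/
def tanner {V C : Type*} (adj : V → C → Prop) : SimpleGraph (V ⊕ C) where
  Adj x y := (∃ v c, x = Sum.inl v ∧ y = Sum.inr c ∧ adj v c) ∨
    (∃ v c, x = Sum.inr c ∧ y = Sum.inl v ∧ adj v c)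
  symm := by
    refine ⟨?_⟩
    rintro x y (⟨v, c, h1, h2, h3⟩ | ⟨v, c, h1, h2, h3⟩)
    · exact Or.inr ⟨v, c, h2, h1, h3⟩
    · exact Or.inl ⟨v, c, h2, h1, h3⟩
  loopless := by
    refine ⟨?_⟩
    rintro x (⟨v, c, h1, h2, _⟩ | ⟨v, c, h1, h2, _⟩) <;> subst h1 <;> simp at h2

/-- The node set `S ∪ Γ(S)` of the induced subgraph `G(S)`, inside `V ⊕ C`. -/
def tsNodes {V C : Type*} (adj : V → C → Prop) (S : Finset V) : Set (V ⊕ C) :=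
  {x | ∃ v ∈ S, x = Sum.inl v ∨ ∃ c, x = Sum.inr c ∧ adj v c}

/-- `DotReach adj T S` : `S` can be obtained from `T` by successively inserting variable nodes,
each of which is adjacent to at least two check nodes of the current induced subgraph. -/
inductive DotReach {V C : Type*} [DecidableEq V] [Fintype C] (adj : V → C → Prop)
    [∀ v c, Decidable (adj v c)] : Finset V → Finset V → Prop
  | refl (T : Finset V) : DotReach adj T T
  | step {T T' : Finset V} (v : V) (hv : v ∉ T')
      (h2 : 2 ≤ (Finset.univ.filter (fun c => adj v c ∧ 0 < chkDeg adj T' c)).card) :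
      DotReach adj T T' → DotReach adj T (insert v T')

namespace SimpleGraph

variable {α : Type*}

open scoped Classical in
noncomputable def componentAvoiding (G : SimpleGraph α) (t : Set α) (w x : α) :
    Option (G.induce (t \ {w})).ConnectedComponent :=
  if hx : x ∈ t \ {w} then some ((G.induce (t \ {w})).connectedComponentMk ⟨x, hx⟩) else none

variable {G : SimpleGraph α} {t : Set α} {w : α}

theorem componentAvoiding_eq_iff {x y : α} (hx : x ∈ t \ {w}) (hy : y ∈ t \ {w}) :
    G.componentAvoiding t w x = G.componentAvoiding t w y ↔
      (G.induce (t \ {w})).Reachable ⟨x, hx⟩ ⟨y, hy⟩ := by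
  simp [componentAvoiding, hx, hy, ConnectedComponent.eq]

theorem componentAvoiding_eq_of_adj {x y : α} (hx : x ∈ t \ {w}) (hy : y ∈ t \ {w})
    (h : G.Adj x y) : G.componentAvoiding t w x = G.componentAvoiding t w y :=
  (componentAvoiding_eq_iff hx hy).2 (Adj.reachable (G := G.induce (t \ {w})) h)

/-- Following a walk of `G[s]` until it first meets `w`. -/
theorem componentAvoiding_eq_or_exists_adj_of_reachable {s : Set α} (hst : s ⊆ t) {a b : s}
    (hab : (G.induce s).Reachable a b) (ha : a.1 ≠ w) :
    G.componentAvoiding t w a = G.componentAvoiding t w b ∨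
      ∃ u ∈ s, G.Adj u w ∧ G.componentAvoiding t w a = G.componentAvoiding t w u := by
  obtain ⟨p⟩ := hab
  induction p with
  | nil => exact Or.inl rfl
  | @cons a c b hac _ ih =>
    by_cases hc : c.1 = w
    · exact Or.inr ⟨a, a.2, hc ▸ hac, rfl⟩
    · have hstep : G.componentAvoiding t w a = G.componentAvoiding t w c :=
        componentAvoiding_eq_of_adj ⟨hst a.2, ha⟩ ⟨hst c.2, hc⟩ hac
      rw [hstep]
      exact ih hc

end SimpleGraph

open SimpleGraph

section Tanner

variable {V C : Type*} {adj : V → C → Prop}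

theorem inl_mem_tsNodes {S : Finset V} {v : V} : Sum.inl v ∈ tsNodes adj S ↔ v ∈ S := by
  simp [tsNodes]

theorem inl_mem_tsNodes_diff {S : Finset V} {v : V} (hv : v ∈ S) (w : C) :
    Sum.inl v ∈ tsNodes adj S \ {Sum.inr w} :=
  ⟨inl_mem_tsNodes.2 hv, by simp⟩

theorem inr_mem_tsNodes {S : Finset V} {v : V} {c : C} (hv : v ∈ S) (hvc : adj v c) :
    Sum.inr c ∈ tsNodes adj S :=
  ⟨v, hv, Or.inr ⟨c, rfl, hvc⟩⟩

theorem tsNodes_mono {S' S : Finset V} (h : S' ⊆ S) : tsNodes adj S' ⊆ tsNodes adj S :=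
  fun _ ⟨v, hv, hx⟩ => ⟨v, h hv, hx⟩

theorem tanner_adj_inl_inr {v : V} {c : C} : (tanner adj).Adj (Sum.inl v) (Sum.inr c) ↔ adj v c := by
  simp [tanner]

theorem tanner_adj_inr {x : V ⊕ C} {c : C} :
    (tanner adj).Adj x (Sum.inr c) ↔ ∃ v, x = Sum.inl v ∧ adj v c := by
  simp [tanner]

/-- The branch of `G(S)` at `w` containing `v`: its component in `G(S) - w` (`none` if `v ∉ S`). -/
noncomputable def branchAt (adj : V → C → Prop) (S : Finset V) (w : C) (v : V) :
    Option ((tanner adj).induce (tsNodes adj S \ {Sum.inr w})).ConnectedComponent :=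
  (tanner adj).componentAvoiding (tsNodes adj S) (Sum.inr w) (Sum.inl v)

variable {S : Finset V} {w : C}

theorem branchAt_eq_iff {u v : V} (hu : u ∈ S) (hv : v ∈ S) :
    branchAt adj S w u = branchAt adj S w v ↔
      ((tanner adj).induce (tsNodes adj S \ {Sum.inr w})).Reachable
        ⟨_, inl_mem_tsNodes_diff hu w⟩ ⟨_, inl_mem_tsNodes_diff hv w⟩ :=
  componentAvoiding_eq_iff _ _

theorem branchAt_eq_of_adj_of_adj {u v : V} {c : C} (hu : u ∈ S) (hv : v ∈ S) (hcw : c ≠ w)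
    (huc : adj u c) (hvc : adj v c) : branchAt adj S w u = branchAt adj S w v := by
  have hc : Sum.inr c ∈ tsNodes adj S \ {Sum.inr w} := ⟨inr_mem_tsNodes hu huc, by simpa⟩
  exact (componentAvoiding_eq_of_adj (inl_mem_tsNodes_diff hu w) hc
    (tanner_adj_inl_inr.2 huc)).trans
    (componentAvoiding_eq_of_adj (inl_mem_tsNodes_diff hv w) hc (tanner_adj_inl_inr.2 hvc)).symm

theorem branchAt_eq_or_exists_of_connected {S' : Finset V} (hS' : S' ⊆ S)
    (hconn : ((tanner adj).induce (tsNodes adj S')).Connected) {v b : V} (hv : v ∈ S')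
    (hb : b ∈ S') :
    branchAt adj S w v = branchAt adj S w b ∨
      ∃ u ∈ S', adj u w ∧ branchAt adj S w v = branchAt adj S w u := by
  rcases componentAvoiding_eq_or_exists_adj_of_reachable (tsNodes_mono hS')
      (hconn.preconnected ⟨_, inl_mem_tsNodes.2 hv⟩ ⟨_, inl_mem_tsNodes.2 hb⟩) Sum.inl_ne_inr
    with h | ⟨x, hx, hxw, h⟩
  · exact Or.inl h
  · obtain ⟨u, rfl, huw⟩ := tanner_adj_inr.1 hxw
    exact Or.inr ⟨u, inl_mem_tsNodes.1 hx, huw, h⟩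

variable [DecidableEq V] [∀ v c, Decidable (adj v c)]

theorem ncard_image_branchAt_le {S' : Finset V} (hS' : S' ⊆ S)
    (hconn : ((tanner adj).induce (tsNodes adj S')).Connected) :
    (branchAt adj S w '' S').ncard ≤ max 1 (chkDeg adj S' w) := by
  obtain ⟨⟨x₀, hx₀⟩⟩ := hconn.nonempty
  obtain ⟨b₀, hb₀, -⟩ := hx₀
  by_cases hN : ∃ b ∈ S', adj b w
  · obtain ⟨b, hb, hbw⟩ := hN
    have hsub : branchAt adj S w '' S' ⊆ branchAt adj S w '' (S'.filter (adj · w)) := by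
      rintro _ ⟨v, hv, rfl⟩
      rcases branchAt_eq_or_exists_of_connected hS' hconn hv hb with h | ⟨u, hu, huw, h⟩
      · exact ⟨b, by simp [hb, hbw], h.symm⟩
      · exact ⟨u, by simp [hu, huw], h.symm⟩
    calc (branchAt adj S w '' S').ncard
        ≤ (branchAt adj S w '' (S'.filter (adj · w))).ncard :=
          Set.ncard_le_ncard hsub (Set.toFinite _)
      _ ≤ ((S'.filter (adj · w) : Finset V) : Set V).ncard := Set.ncard_image_le (Set.toFinite _)
      _ = chkDeg adj S' w := Set.ncard_coe_finset _
      _ ≤ _ := le_max_right _ _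
  · have hsub : branchAt adj S w '' S' ⊆ {branchAt adj S w b₀} := by
      rintro _ ⟨v, hv, rfl⟩
      rcases branchAt_eq_or_exists_of_connected hS' hconn hv hb₀ with h | ⟨u, hu, huw, -⟩
      · exact h
      · exact absurd ⟨u, hu, huw⟩ hN
    calc (branchAt adj S w '' S').ncard ≤ 1 := by
          simpa using Set.ncard_le_ncard hsub (Set.toFinite _)
      _ ≤ _ := le_max_left _ _

variable [Fintype C]

theorem DotReach.image_subset {β : Type*} {f : V → β}
    (hf : ∀ u ∈ S, ∀ v ∈ S, ∀ c, c ≠ w → adj u c → adj v c → f u = f v)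
    {T T' : Finset V} (h : DotReach adj T T') (hT' : T' ⊆ S) : f '' T' ⊆ f '' T := by
  induction h with
  | refl => exact subset_rfl
  | @step T' v hv h2 _ ih =>
    have hT'S : T' ⊆ S := (Finset.subset_insert v T').trans hT'
    obtain ⟨c, hc, hcw⟩ := Finset.exists_mem_ne (one_lt_two.trans_le h2) w
    obtain ⟨-, hvc, hdeg⟩ := Finset.mem_filter.1 hc
    obtain ⟨u, hu⟩ := Finset.card_pos.1 hdeg
    obtain ⟨huT', huc⟩ := Finset.mem_filter.1 hu
    rw [Finset.coe_insert, Set.image_insert_eq]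
    refine Set.insert_subset ?_ (ih hT'S)
    rw [hf v (hT' (Finset.mem_insert_self v T')) u (hT'S huT') c hcw hvc huc]
    exact ih hT'S ⟨u, huT', rfl⟩

end Tanner

theorem nets_disconnected_not_dot_reachable_general {V C : Type*} [Fintype C] [DecidableEq V]
    (adj : V → C → Prop) [∀ v c, Decidable (adj v c)]
    (S : Finset V) (w : C) (k : ℕ) (hk : 3 ≤ k) (hdeg : chkDeg adj S w = k)
    (hsep : ∀ v₁ v₂ : V, v₁ ∈ S → v₂ ∈ S → adj v₁ w → adj v₂ w → v₁ ≠ v₂ →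
      ∀ (h₁ : Sum.inl v₁ ∈ tsNodes adj S \ {Sum.inr w})
        (h₂ : Sum.inl v₂ ∈ tsNodes adj S \ {Sum.inr w}),
        ¬ ((tanner adj).induce (tsNodes adj S \ {Sum.inr w})).Reachable ⟨_, h₁⟩ ⟨_, h₂⟩) :
    ¬ ∃ S' : Finset V, S' ⊂ S ∧
      ((tanner adj).induce (tsNodes adj S')).Connected ∧
      (∀ c : C, chkDeg adj S' c ≤ 2) ∧ DotReach adj S' S := by
  rintro ⟨S', hS'S, hS'conn, hS'deg, hreach⟩
  have hinj : Set.InjOn (branchAt adj S w) ↑(S.filter (adj · w)) := by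
    intro u hu v hv huv
    simp only [Finset.mem_coe, Finset.mem_filter] at hu hv
    by_contra hne
    exact hsep u v hu.1 hv.1 hu.2 hv.2 hne _ _ ((branchAt_eq_iff hu.1 hv.1).1 huv)
  have hbranches : branchAt adj S w '' ↑(S.filter (adj · w)) ⊆ branchAt adj S w '' S' :=
    (Set.image_mono (Finset.coe_subset.2 (Finset.filter_subset _ _))).trans <| hreach.image_subset
      (fun u hu v hv _ hcw huc hvc => branchAt_eq_of_adj_of_adj hu hv hcw huc hvc) subset_rfl
  have hk' : k ≤ max 1 (chkDeg adj S' w) :=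
    calc k = (branchAt adj S w '' ↑(S.filter (adj · w))).ncard := by
          rw [hinj.ncard_image, Set.ncard_coe_finset, ← hdeg, chkDeg]
      _ ≤ (branchAt adj S w '' S').ncard := Set.ncard_le_ncard hbranches (Set.toFinite _)
      _ ≤ max 1 (chkDeg adj S' w) := ncard_image_branchAt_le hS'S.subset hS'conn
  have := hS'deg w
  omega

/-- If `G(S)` is connected and contains a check node `w` of degree `k ≥ 3` such
that deleting `w` disconnects the distinct neighbors of `w` from each other (each of the `k`
components containing exactly one neighbor of `w`, and every node reachable from some
neighbor of `w`), then `S` cannot be obtained from a proper subset `S'` whose induced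
subgraph is connected with all check degrees ≤ 2 (an ETS) by successively adding variable
nodes each connected to at least 2 check nodes of the current subgraph. -/
theorem nets_disconnected_not_dot_reachable {V C : Type*} [Fintype C] [DecidableEq V]
    (adj : V → C → Prop) [∀ v c, Decidable (adj v c)]
    (S : Finset V) (w : C) (k : ℕ) (hk : 3 ≤ k) (hdeg : chkDeg adj S w = k)
    (hconn : ((tanner adj).induce (tsNodes adj S)).Connected)
    (hsep : ∀ v₁ v₂ : V, v₁ ∈ S → v₂ ∈ S → adj v₁ w → adj v₂ w → v₁ ≠ v₂ →
      ∀ (h₁ : Sum.inl v₁ ∈ tsNodes adj S \ {Sum.inr w})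
        (h₂ : Sum.inl v₂ ∈ tsNodes adj S \ {Sum.inr w}),
        ¬ ((tanner adj).induce (tsNodes adj S \ {Sum.inr w})).Reachable ⟨_, h₁⟩ ⟨_, h₂⟩)
    (hcover : ∀ x : (tsNodes adj S \ {Sum.inr w} : Set (V ⊕ C)),
      ∃ v ∈ S, adj v w ∧ ∃ h : Sum.inl v ∈ tsNodes adj S \ {Sum.inr w},
        ((tanner adj).induce (tsNodes adj S \ {Sum.inr w})).Reachable x ⟨_, h⟩) :
    ¬ ∃ S' : Finset V, S' ⊂ S ∧
      ((tanner adj).induce (tsNodes adj S')).Connected ∧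
      (∀ c : C, chkDeg adj S' c ≤ 2) ∧ DotReach adj S' S :=
  nets_disconnected_not_dot_reachable_general adj S w k hk hdeg hsep
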